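/- Let n, k be positive integers with 2·√n − 1 ≤ k < n. Then N(n, k) ≥ n − √n. -/
import Mathlib


/-- A set `S` of permutations of `{1,…,n}` (modelled as `Fin n`) is `k`-suitable if for
every pointed `k`-subset `(A, a)` there is `σ ∈ S` with `σ b ≤ σ a` for every `b ∈ A`. -/
def IsSuitable (n k : ℕ) (S : Finset (Equiv.Perm (Fin n))) : Prop :=
  ∀ A : Finset (Fin n), A.card = k → ∀ a ∈ A, ∃ σ ∈ S, ∀ b ∈ A, σ b ≤ σ a

/-- `N(n, k)`: the minimum cardinality of a `k`-suitable set of permutations of `{1,…,n}`. -/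
noncomputable def suitableNumber (n k : ℕ) : ℕ :=
  sInf {m : ℕ | ∃ S : Finset (Equiv.Perm (Fin n)), IsSuitable n k S ∧ S.card = m}

/-- Every element of `Fin n` is at most `⟨n-1,_⟩`. -/
lemma le_top_fin {n : ℕ} (hn : 1 ≤ n) (c : Fin n) : c ≤ ⟨n - 1, Nat.sub_lt hn one_pos⟩ := by
  rw [Fin.le_def]
  exact Nat.le_sub_one_of_lt c.isLt

/-- The set of all permutations is `k`-suitable. -/
lemma isSuitable_univ (n k : ℕ) (hn : 1 ≤ n) : IsSuitable n k Finset.univ := by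
  intro A _hA a _ha
  refine ⟨Equiv.swap a ⟨n - 1, Nat.sub_lt hn one_pos⟩, Finset.mem_univ _, fun b _ => ?_⟩
  rw [Equiv.swap_apply_left]
  exact le_top_fin hn _

/-- Dushnik's lower-bound argument: if `1 ≤ r` and `r + n/r ≤ k + 1`, then a `k`-suitable
set of permutations of `Fin n` must have more than `n - r` elements. -/
lemma dushnik (n k r : ℕ) (hn : 1 ≤ n) (hr : 1 ≤ r) (hk2 : k < n)
    (hrn : r ≤ n) (hrk : r + n / r ≤ k + 1)
    (S : Finset (Equiv.Perm (Fin n))) (hS : IsSuitable n k S)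
    (hm : S.card ≤ n - r) : False := by
  classical
  set q := n / r with hq
  set lastF : Fin n := ⟨n - 1, Nat.sub_lt hn one_pos⟩ with hlast
  set top : Equiv.Perm (Fin n) → Fin n := fun σ => σ.symm lastF with htop
  set T : Finset (Fin n) := S.image top with hT
  -- find `X ⊆ Tᶜ` of size `r`
  have hTcard : T.card ≤ S.card := Finset.card_image_le
  have hcardfin : Fintype.card (Fin n) = n := Fintype.card_fin n
  have hcompl : r ≤ Tᶜ.card := by
    rw [Finset.card_compl, hcardfin]
    omega
  obtain ⟨X, hXsub, hXcard⟩ := Finset.exists_subset_card_eq hcompl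
  have hXne : X.Nonempty := Finset.card_pos.mp (by omega)
  -- `g σ` is the maximum of `X` in the order given by `σ`
  set g : Equiv.Perm (Fin n) → Fin n := fun σ =>
    σ.symm ((X.image σ).max' (hXne.image σ)) with hg
  have hgmem : ∀ σ : Equiv.Perm (Fin n), g σ ∈ X := by
    intro σ
    obtain ⟨x, hx, hxe⟩ := Finset.mem_image.mp ((X.image σ).max'_mem (hXne.image σ))
    have hgx : g σ = x := by rw [hg]; simp [← hxe]
    rwa [hgx]
  have hgmax : ∀ σ : Equiv.Perm (Fin n), ∀ y ∈ X, σ y ≤ σ (g σ) := by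
    intro σ y hy
    have hσg : σ (g σ) = (X.image σ).max' (hXne.image σ) := by rw [hg]; simp
    rw [hσg]
    exact Finset.le_max' _ _ (Finset.mem_image_of_mem σ hy)
  -- pigeonhole: some `a ∈ X` is the `X`-maximum of fewer than `q` permutations of `S`
  have hsum : S.card = ∑ a ∈ X, (S.filter fun σ => g σ = a).card :=
    Finset.card_eq_sum_card_fiberwise (fun σ _ => hgmem σ)
  have hpige : ∃ a ∈ X, (S.filter fun σ => g σ = a).card < q := by
    by_contra h
    push_neg at h
    have h1 : X.card • q ≤ ∑ a ∈ X, (S.filter fun σ => g σ = a).card :=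
      Finset.card_nsmul_le_sum _ _ _ h
    rw [← hsum, hXcard, smul_eq_mul] at h1
    have h2 : n < n / r * r + r := Nat.lt_div_mul_add hr
    rw [← hq] at h2
    have h1' : q * r ≤ S.card := by rwa [mul_comm] at h1
    omega
  obtain ⟨a, haX, hfib⟩ := hpige
  have hq1 : 1 ≤ q := by omega
  set F : Finset (Equiv.Perm (Fin n)) := S.filter fun σ => g σ = a with hF
  set B : Finset (Fin n) := (X.erase a) ∪ F.image top with hB
  -- the blocking set is small enough
  have hBcard : B.card ≤ (r - 1) + (q - 1) := by
    have h1 : (X.erase a).card = r - 1 := by rw [Finset.card_erase_of_mem haX, hXcard]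
    have h2 : (F.image top).card ≤ q - 1 := by
      have := Finset.card_image_le (s := F) (f := top)
      omega
    calc B.card ≤ (X.erase a).card + (F.image top).card := Finset.card_union_le _ _
      _ ≤ (r - 1) + (q - 1) := by omega
  have hiBcard : (insert a B).card ≤ k := by
    have := Finset.card_insert_le a B
    omega
  -- extend to a pointed `k`-set
  obtain ⟨A, hABsub, _hAu, hAcard⟩ :=
    Finset.exists_subsuperset_card_eq (Finset.subset_univ (insert a B)) hiBcard
      (by rw [Finset.card_univ, hcardfin]; omega)
  have haA : a ∈ A := hABsub (Finset.mem_insert_self a B)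
  have hBA : B ⊆ A := (Finset.subset_insert a B).trans hABsub
  obtain ⟨σ, hσS, hσall⟩ := hS A hAcard a haA
  have haT : a ∉ T := by
    have := hXsub haX
    simpa using this
  by_cases hga : g σ = a
  · -- `a` is the `X`-maximum of `σ`: its global top blocks it
    have hσF : σ ∈ F := Finset.mem_filter.mpr ⟨hσS, hga⟩
    have htopB : top σ ∈ B := Finset.mem_union_right _ (Finset.mem_image_of_mem top hσF)
    have h1 : σ (top σ) ≤ σ a := hσall _ (hBA htopB)
    have h2 : σ (top σ) = lastF := by rw [htop]; simp
    have h3 : σ a ≤ lastF := le_top_fin hn _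
    have h4 : σ a = lastF := le_antisymm h3 (h2 ▸ h1)
    have h5 : a = top σ := by
      rw [htop]
      exact (Equiv.eq_symm_apply σ).mpr h4
    exact haT (h5 ▸ Finset.mem_image_of_mem top hσS)
  · -- otherwise the `X`-maximum of `σ` blocks it
    have hgB : g σ ∈ B := Finset.mem_union_left _ (Finset.mem_erase.mpr ⟨hga, hgmem σ⟩)
    have h1 : σ (g σ) ≤ σ a := hσall _ (hBA hgB)
    have h2 : σ a ≤ σ (g σ) := hgmax σ a haX
    exact hga (σ.injective (le_antisymm h1 h2))

/-- If `2√n - 1 ≤ k < n`, then `N(n, k) ≥ n - √n`. -/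
theorem suitableNumber_ge (n k : ℕ) (hn : 1 ≤ n) (hk : 1 ≤ k)
    (hk1 : 2 * Real.sqrt n - 1 ≤ (k : ℝ)) (hk2 : k < n) :
    (n : ℝ) - Real.sqrt n ≤ (suitableNumber n k : ℝ) := by
  classical
  set r := Nat.sqrt n with hrdef
  have hr : 1 ≤ r := Nat.sqrt_pos.mpr hn
  set q := n / r with hqdef
  -- arithmetic: `r + q ≤ k + 1`
  have hqr : r ≤ q := (Nat.le_div_iff_mul_le hr).mpr (Nat.sqrt_le n)
  have hq2 : q ≤ r + 2 := by
    have h1 : n < (r + 1) * (r + 1) := Nat.lt_succ_sqrt n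
    have h2 : n / r < r + 3 := by
      rw [Nat.div_lt_iff_lt_mul hr]
      nlinarith
    omega
  have hqrn : q * r ≤ n := Nat.div_mul_le_self n r
  have hsq : (0:ℝ) ≤ Real.sqrt n := Real.sqrt_nonneg _
  have hkey : ((q:ℝ) + r - 1) ^ 2 < (2 * Real.sqrt n) ^ 2 := by
    have hc1 : (1:ℝ) ≤ r := by exact_mod_cast hr
    have hc2 : (r:ℝ) ≤ q := by exact_mod_cast hqr
    have hc3 : (q:ℝ) ≤ r + 2 := by exact_mod_cast hq2
    have hc4 : (q:ℝ) * r ≤ n := by exact_mod_cast hqrn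
    have hs : (2 * Real.sqrt n) ^ 2 = 4 * n := by
      rw [mul_pow, Real.sq_sqrt (by positivity : (0:ℝ) ≤ (n:ℝ))]
      ring
    rw [hs]
    nlinarith
  have hlt : (q:ℝ) + r - 1 < 2 * Real.sqrt n := by
    by_contra hcon
    push_neg at hcon
    nlinarith
  have hrk : r + q ≤ k + 1 := by
    have h1 : (q:ℝ) + r < (k:ℝ) + 2 := by linarith
    have h2 : q + r < k + 2 := by exact_mod_cast h1
    omega
  -- the infimum is attained
  have hne : {m : ℕ | ∃ S : Finset (Equiv.Perm (Fin n)), IsSuitable n k S ∧ S.card = m}.Nonempty :=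
    ⟨(Finset.univ : Finset (Equiv.Perm (Fin n))).card, Finset.univ, isSuitable_univ n k hn, rfl⟩
  obtain ⟨S, hSsuit, hScard⟩ : suitableNumber n k ∈
      {m : ℕ | ∃ S : Finset (Equiv.Perm (Fin n)), IsSuitable n k S ∧ S.card = m} :=
    Nat.sInf_mem hne
  have hgt : n - r < S.card := by
    by_contra h
    push_neg at h
    exact dushnik n k r hn hr hk2 (Nat.sqrt_le_self n) hrk S hSsuit h
  -- conclude
  have hrn : r ≤ n := Nat.sqrt_le_self n
  have hrs : (r:ℝ) ≤ Real.sqrt n := by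
    have h1 : Real.sqrt ((r:ℝ) ^ 2) ≤ Real.sqrt n := by
      apply Real.sqrt_le_sqrt
      exact_mod_cast Nat.sqrt_le' n
    rwa [Real.sqrt_sq (by positivity : (0:ℝ) ≤ (r:ℝ))] at h1
  have hcast : ((n - r : ℕ) : ℝ) = (n:ℝ) - r := by
    rw [Nat.cast_sub hrn]
  have hlt2 : ((n - r : ℕ) : ℝ) < (S.card : ℝ) := by exact_mod_cast hgt
  rw [hScard] at hlt2
  rw [hcast] at hlt2
  push_cast
  linarith
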